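/- Assume the non-degeneracy condition with recoverable hidden states H* = {j*} × S*, and regularity. Let e(z) ∈ ℝ^{|𝕄||H|} be the embedding with e(z)_{(m,j,s)} = W_{z,(m,j,s)}, and fix b ∈ ℝ^{|𝕄|}. Define Î(x) = {i ∈ [T] : supp(P(J_i | X_{−i} = x_{−i})) = {j*} and supp(P(S_i | X_{−i} = x_{−i})) ⊆ S*} and G_i(x) = P(X_i | X_{−i} = x_{−i}). Then there exist Θ^{(V)} ∈ ℝ^{|𝕄||H|×|X|} and u ∈ ℝ^{|𝕄||H|} such that whenever P(X_{1:T} = x) > 0 and Î(x) is nonempty, for all i ∈ Î(x): u^T ((Θ^{(V)} G_i(x)) ⊙ e(x_i)) = r_{x,i} · b^T P(M_{j*} | X_{1:T} = x) for some scalar r_{x,i} > 0. -/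

import Mathlib

open scoped Classical
open Matrix

noncomputable section

/-- Forward pass for a Markov chain with transition matrix `A`. -/
def fwdVec {H : Type*} [Fintype H] (A : Matrix H H ℝ) :
    (H → ℝ) → List (H → ℝ) → (H → ℝ)
  | μ, [] => μ
  | μ, v :: vs => fwdVec A (A.mulVec fun h => μ h * v h) vs

/-- `mJointAt A μ W m x i g = P(H_i = g, X_{−i} = x_{−i} | M = m)` in a
memory-augmented HMM (hidden chain `H_1, …, H_T`, `P(H_1) = A μ`). -/
def mJointAt {𝕄 S X : Type*} {N T : ℕ} [Fintype S] [DecidableEq S]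
    (A : Matrix (Fin N × S) (Fin N × S) ℝ) (μ : Fin N × S → ℝ)
    (W : X → 𝕄 → Fin N × S → ℝ) (m : Fin N → 𝕄)
    (x : Fin T → X) (i : Fin T) (g : Fin N × S) : ℝ :=
  ∑ h, fwdVec A (A.mulVec μ)
    (List.ofFn fun k : Fin T =>
      if k = i then (fun g' => if g' = g then 1 else 0)
      else fun g' => W (x k) (m g'.1) g') h

/-- `mZ … x i = P(X_{−i} = x_{−i})`. -/
def mZ {𝕄 S X : Type*} {N T : ℕ} [Fintype 𝕄] [Fintype S] [DecidableEq S]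
    (pM : (Fin N → 𝕄) → ℝ) (A : Matrix (Fin N × S) (Fin N × S) ℝ)
    (μ : Fin N × S → ℝ) (W : X → 𝕄 → Fin N × S → ℝ)
    (x : Fin T → X) (i : Fin T) : ℝ :=
  ∑ m, pM m * ∑ g, mJointAt A μ W m x i g

/-- `mSeqPm … m x = P(X_{1:T} = x | M = m)`. -/
def mSeqPm {𝕄 S X : Type*} {N T : ℕ} [Fintype S]
    (A : Matrix (Fin N × S) (Fin N × S) ℝ) (μ : Fin N × S → ℝ)
    (W : X → 𝕄 → Fin N × S → ℝ) (m : Fin N → 𝕄) (x : Fin T → X) : ℝ :=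
  ∑ h, fwdVec A (A.mulVec μ)
    (List.ofFn fun k : Fin T => fun g' => W (x k) (m g'.1) g') h

/-- `mSeqP … x = P(X_{1:T} = x)`. -/
def mSeqP {𝕄 S X : Type*} {N T : ℕ} [Fintype 𝕄] [Fintype S]
    (pM : (Fin N → 𝕄) → ℝ) (A : Matrix (Fin N × S) (Fin N × S) ℝ)
    (μ : Fin N × S → ℝ) (W : X → 𝕄 → Fin N × S → ℝ) (x : Fin T → X) : ℝ :=
  ∑ m, pM m * mSeqPm A μ W m x

/-- `mGtok … x i z = P(X_i = z | X_{−i} = x_{−i})`, the pretrained model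
output `G_i(x)` at position `i`. -/
def mGtok {𝕄 S X : Type*} {N T : ℕ} [Fintype 𝕄] [Fintype S] [DecidableEq S]
    (pM : (Fin N → 𝕄) → ℝ) (A : Matrix (Fin N × S) (Fin N × S) ℝ)
    (μ : Fin N × S → ℝ) (W : X → 𝕄 → Fin N × S → ℝ)
    (x : Fin T → X) (i : Fin T) (z : X) : ℝ :=
  (∑ m, pM m * ∑ g, mJointAt A μ W m x i g * W z (m g.1) g) / mZ pM A μ W x i

/-- `mPostH … x i g = P(H_i = g | X_{−i} = x_{−i})`. -/
def mPostH {𝕄 S X : Type*} {N T : ℕ} [Fintype 𝕄] [Fintype S] [DecidableEq S]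
    (pM : (Fin N → 𝕄) → ℝ) (A : Matrix (Fin N × S) (Fin N × S) ℝ)
    (μ : Fin N × S → ℝ) (W : X → 𝕄 → Fin N × S → ℝ)
    (x : Fin T → X) (i : Fin T) (g : Fin N × S) : ℝ :=
  (∑ m, pM m * mJointAt A μ W m x i g) / mZ pM A μ W x i

/-- `mMemPost … x m0 = P(M_{j*} = m0 | X_{1:T} = x)`. -/
def mMemPost {𝕄 S X : Type*} {N T : ℕ} [Fintype 𝕄] [Fintype S] [DecidableEq 𝕄]
    (pM : (Fin N → 𝕄) → ℝ) (A : Matrix (Fin N × S) (Fin N × S) ℝ)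
    (μ : Fin N × S → ℝ) (W : X → 𝕄 → Fin N × S → ℝ) (jstar : Fin N)
    (x : Fin T → X) (m0 : 𝕄) : ℝ :=
  (∑ m, if m jstar = m0 then pM m * mSeqPm A μ W m x else 0) / mSeqP pM A μ W x

/-!
On `Î(x)` the posterior of `H_i` given `X_{−i} = x_{−i}` is supported on `H* = {j*} × S*`, so
`G_i(x)` is a combination of the linearly independent columns `W_{:,(m,h)}`, `h ∈ H*`, with
coefficient `P(M_{j*} = m, H_i = h, X_{−i} = x_{−i}) / P(X_{−i} = x_{−i})` at `(m, h)`. A linear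
map sending each of these columns to the matching coordinate vector (its matrix is `Θⱽ`) reads
the coefficients off. Multiplying by `e(x_i)` and summing against `u_{(m,h)} = b_m` then
marginalizes `H_i` against the emission of `x_i`, leaving
`∑ₘ b(m_{j*}) P(M = m, X_{1:T} = x) / P(X_{−i} = x_{−i})`, which is
`bᵀ P(M_{j*} | X_{1:T} = x)` times `r = P(X_{1:T} = x) / P(X_{−i} = x_{−i}) > 0`.
-/

theorem LinearIndependent.exists_linearMap_apply_eq {K V V' ι : Type*} [Field K]
    [AddCommGroup V] [Module K V] [AddCommGroup V'] [Module K V'] {v : ι → V}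
    (hv : LinearIndependent K v) (w : ι → V') : ∃ Φ : V →ₗ[K] V', ∀ i, Φ (v i) = w i := by
  obtain ⟨Φ, hΦ⟩ := LinearMap.exists_extend ((Module.Basis.span hv).constr K w)
  refine ⟨Φ, fun i => ?_⟩
  have := congr($hΦ (Module.Basis.span hv i))
  rwa [Module.Basis.constr_basis, LinearMap.comp_apply, Submodule.subtype_apply,
    Module.Basis.span_apply] at this

section ForwardPass

variable {H : Type*} [Fintype H] (A : Matrix H H ℝ)

theorem fwdVec_nonneg (hA : ∀ g g', 0 ≤ A g' g) :
    ∀ (l : List (H → ℝ)) (μ : H → ℝ), 0 ≤ μ → (∀ v ∈ l, 0 ≤ v) → 0 ≤ fwdVec A μ l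
  | [], _, hμ, _ => hμ
  | v :: vs, _, hμ, hl =>
    fwdVec_nonneg hA vs _
      (fun h => Finset.sum_nonneg fun g _ =>
        mul_nonneg (hA g h) (mul_nonneg (hμ g) (hl v List.mem_cons_self g)))
      fun w hw => hl w (List.mem_cons_of_mem _ hw)

variable [DecidableEq H]

theorem fwdVec_eq_mulVec :
    ∀ l : List (H → ℝ), ∃ M : Matrix H H ℝ, ∀ μ, fwdVec A μ l = M *ᵥ μ
  | [] => ⟨1, fun μ => (one_mulVec μ).symm⟩
  | v :: vs => by
    obtain ⟨M, hM⟩ := fwdVec_eq_mulVec vs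
    refine ⟨M * A * diagonal v, fun μ => ?_⟩
    have hprod : (fun h => μ h * v h) = diagonal v *ᵥ μ := by
      funext h; rw [mulVec_diagonal, mul_comm]
    rw [fwdVec, hM, hprod, mulVec_mulVec, mulVec_mulVec]

theorem fwdVec_ofFn_update_linear :
    ∀ {T : ℕ} (f : Fin T → H → ℝ) (i : Fin T) (μ : H → ℝ),
      ∃ L : (H → ℝ) →ₗ[ℝ] H → ℝ, ∀ c, fwdVec A μ (List.ofFn (Function.update f i c)) = L c
  | 0, _, i, _ => i.elim0
  | T + 1, f, i, μ => by
    induction i using Fin.cases with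
    | zero =>
      obtain ⟨M, hM⟩ := fwdVec_eq_mulVec A (List.ofFn fun k : Fin T => f k.succ)
      refine ⟨(M * A * diagonal μ).mulVecLin, fun c => ?_⟩
      have hprod : (fun h => μ h * c h) = diagonal μ *ᵥ c := by
        funext h; rw [mulVec_diagonal]
      simp only [List.ofFn_succ, Function.update_self,
        Function.update_of_ne (Fin.succ_ne_zero _), fwdVec, hM, hprod, mulVec_mulVec,
        Matrix.mul_assoc, mulVecLin_apply]
    | succ j =>
      obtain ⟨L, hL⟩ := fwdVec_ofFn_update_linear (fun k : Fin T => f k.succ) j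
        (A *ᵥ fun h => μ h * f 0 h)
      refine ⟨L, fun c => ?_⟩
      simp only [List.ofFn_succ, Function.update_of_ne (Fin.succ_ne_zero j).symm,
        Function.update_apply, Fin.succ_inj, fwdVec, ← hL]
      congr 2
      funext k
      rw [Function.update_apply]

end ForwardPass

section MemoryHMM

variable {𝕄 S X : Type*} {N T : ℕ} [Fintype S] [DecidableEq S]
  (pM : (Fin N → 𝕄) → ℝ) (A : Matrix (Fin N × S) (Fin N × S) ℝ) (μ : Fin N × S → ℝ)
  (W : X → 𝕄 → Fin N × S → ℝ) (x : Fin T → X) (i : Fin T)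

theorem sum_mJointAt_mul_emission (m : Fin N → 𝕄) :
    ∑ g, mJointAt A μ W m x i g * W (x i) (m g.1) g = mSeqPm A μ W m x := by
  set e : Fin T → Fin N × S → ℝ := fun k g => W (x k) (m g.1) g
  obtain ⟨L, hL⟩ := fwdVec_ofFn_update_linear A e i (A *ᵥ μ)
  have hjoint : ∀ g, mJointAt A μ W m x i g = ∑ h, L (Pi.single g 1) h := by
    intro g
    have hlist : (fun k => if k = i then (fun g' => if g' = g then (1 : ℝ) else 0) else e k)
        = Function.update e i (Pi.single g 1) := by
      ext k g'
      by_cases hk : k = i <;> simp [hk, Pi.single_apply]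
    rw [mJointAt, ← hL, ← hlist]
  have hseq : mSeqPm A μ W m x = ∑ h, L (e i) h := by
    rw [mSeqPm, ← hL, Function.update_eq_self]
  have hdecomp : e i = ∑ g, e i g • Pi.single g 1 := by
    simp only [← Pi.single_smul, smul_eq_mul, mul_one, Finset.univ_sum_single]
  calc ∑ g, mJointAt A μ W m x i g * W (x i) (m g.1) g
      = ∑ h, ∑ g, e i g * L (Pi.single g 1) h := by
        simp only [hjoint, Finset.sum_mul]
        rw [Finset.sum_comm]
        exact Finset.sum_congr rfl fun h _ => Finset.sum_congr rfl fun g _ => mul_comm _ _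
    _ = mSeqPm A μ W m x := by
        rw [hseq]
        conv_rhs => rw [hdecomp]
        simp only [map_sum, map_smul, Finset.sum_apply, Pi.smul_apply, smul_eq_mul]

variable {pM A μ W}

theorem mJointAt_nonneg (hμ0 : ∀ g, 0 ≤ μ g) (hA0 : ∀ g g', 0 ≤ A g' g)
    (hW0 : ∀ z m0 g, 0 ≤ W z m0 g) (m : Fin N → 𝕄) (g : Fin N × S) :
    0 ≤ mJointAt A μ W m x i g := by
  refine Finset.sum_nonneg fun h _ => fwdVec_nonneg A hA0 _ _ ?_ ?_ h
  · exact fun h' => Finset.sum_nonneg fun g' _ => mul_nonneg (hA0 g' h') (hμ0 g')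
  · intro v hv g'
    obtain ⟨k, rfl⟩ := List.mem_ofFn.mp hv
    by_cases hk : k = i
    · simp only [hk, if_true]; split_ifs <;> norm_num
    · simp only [hk, if_false]; exact hW0 _ _ _

variable [Fintype 𝕄]

theorem mZ_nonneg (hpM0 : ∀ m, 0 ≤ pM m) (hJ : ∀ m g, 0 ≤ mJointAt A μ W m x i g) :
    0 ≤ mZ pM A μ W x i :=
  Finset.sum_nonneg fun m _ => mul_nonneg (hpM0 m) (Finset.sum_nonneg fun g _ => hJ m g)

theorem mPostH_nonneg (hpM0 : ∀ m, 0 ≤ pM m) (hJ : ∀ m g, 0 ≤ mJointAt A μ W m x i g)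
    (g : Fin N × S) : 0 ≤ mPostH pM A μ W x i g :=
  div_nonneg (Finset.sum_nonneg fun m _ => mul_nonneg (hpM0 m) (hJ m g)) (mZ_nonneg x i hpM0 hJ)

theorem mZ_ne_zero_of_mPostH_ne_zero {g : Fin N × S} (h : mPostH pM A μ W x i g ≠ 0) :
    mZ pM A μ W x i ≠ 0 := by
  intro hZ
  simp [mPostH, hZ] at h

theorem pM_mul_mJointAt_eq_zero (hpM0 : ∀ m, 0 ≤ pM m)
    (hJ : ∀ m g, 0 ≤ mJointAt A μ W m x i g) (hZ : mZ pM A μ W x i ≠ 0) {g : Fin N × S}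
    (hg : mPostH pM A μ W x i g = 0) (m : Fin N → 𝕄) : pM m * mJointAt A μ W m x i g = 0 := by
  rw [mPostH, div_eq_zero_iff, or_iff_left hZ,
    Finset.sum_eq_zero_iff_of_nonneg fun m _ => mul_nonneg (hpM0 m) (hJ m g)] at hg
  exact hg m (Finset.mem_univ m)

theorem mGtok_eq_smul_sum :
    mGtok pM A μ W x i = (mZ pM A μ W x i)⁻¹ •
      ∑ m, ∑ g, (pM m * mJointAt A μ W m x i g) • fun z => W z (m g.1) g := by
  funext z
  simp only [mGtok, Pi.smul_apply, Finset.sum_apply, smul_eq_mul, div_eq_inv_mul, Finset.mul_sum,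
    mul_assoc]

variable {x i} {jstar : Fin N} {Sstar : Finset S}

theorem sum_mul_linearMap_mGtok_mul_emission [DecidableEq 𝕄]
    {Φ : (X → ℝ) →ₗ[ℝ] 𝕄 × (Fin N × S) → ℝ}
    (hΦ : ∀ p : 𝕄 × {s // s ∈ Sstar},
      Φ (fun z => W z p.1 (jstar, p.2.1)) = Pi.single (p.1, (jstar, p.2.1)) 1)
    (hvan : ∀ m g, ¬(g.1 = jstar ∧ g.2 ∈ Sstar) → pM m * mJointAt A μ W m x i g = 0)
    (b : 𝕄 → ℝ) :
    ∑ p : 𝕄 × (Fin N × S), b p.1 * (Φ (mGtok pM A μ W x i) p * W (x i) p.1 p.2)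
      = (∑ m, b (m jstar) * (pM m * mSeqPm A μ W m x)) / mZ pM A μ W x i := by
  set F : 𝕄 × (Fin N × S) → ℝ := fun p => b p.1 * W (x i) p.1 p.2
  have hcol : ∀ m g, (pM m * mJointAt A μ W m x i g) • Φ (fun z => W z (m g.1) g)
      = (pM m * mJointAt A μ W m x i g) • Pi.single (m g.1, g) 1 := by
    rintro m ⟨j, s⟩
    by_cases hg : j = jstar ∧ s ∈ Sstar
    · obtain ⟨rfl, hs⟩ := hg
      exact congrArg _ (hΦ (m j, ⟨s, hs⟩))
    · rw [hvan m _ hg, zero_smul, zero_smul]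
  have hjstar : ∀ m g, pM m * mJointAt A μ W m x i g * F (m g.1, g)
      = b (m jstar) * (pM m * (mJointAt A μ W m x i g * W (x i) (m g.1) g)) := by
    intro m g
    by_cases hg : g.1 = jstar
    · simp only [F, hg]; ring
    · rw [← mul_assoc (pM m), hvan m g fun h => hg h.1]; ring
  calc ∑ p, b p.1 * (Φ (mGtok pM A μ W x i) p * W (x i) p.1 p.2)
      = Φ (mGtok pM A μ W x i) ⬝ᵥ F := by
        simp only [dotProduct, F]
        exact Finset.sum_congr rfl fun p _ => by ring
    _ = (mZ pM A μ W x i)⁻¹ * ∑ m, ∑ g, pM m * mJointAt A μ W m x i g * F (m g.1, g) := by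
        simp only [mGtok_eq_smul_sum, map_smul, map_sum, hcol, smul_dotProduct, sum_dotProduct,
          single_dotProduct, one_mul, smul_eq_mul]
    _ = (∑ m, b (m jstar) * (pM m * mSeqPm A μ W m x)) / mZ pM A μ W x i := by
        simp only [hjstar, ← Finset.mul_sum, sum_mJointAt_mul_emission, inv_mul_eq_div]

theorem pM_mul_mJointAt_eq_zero_off_recoverable (hpM0 : ∀ m, 0 ≤ pM m)
    (hJ : ∀ m g, 0 ≤ mJointAt A μ W m x i g) (hZ : mZ pM A μ W x i ≠ 0)
    (hJstar : ∀ j, j ≠ jstar → ∑ s, mPostH pM A μ W x i (j, s) = 0)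
    (hSstar : ∀ s, s ∉ Sstar → ∑ j, mPostH pM A μ W x i (j, s) = 0)
    (m : Fin N → 𝕄) (g : Fin N × S) (hg : ¬(g.1 = jstar ∧ g.2 ∈ Sstar)) :
    pM m * mJointAt A μ W m x i g = 0 := by
  have hpost := mPostH_nonneg x i hpM0 hJ
  refine pM_mul_mJointAt_eq_zero x i hpM0 hJ hZ ?_ m
  rcases not_and_or.mp hg with hj | hs
  · exact (Finset.sum_eq_zero_iff_of_nonneg fun s _ => hpost _).mp (hJstar g.1 hj) g.2
      (Finset.mem_univ _)
  · exact (Finset.sum_eq_zero_iff_of_nonneg fun j _ => hpost _).mp (hSstar g.2 hs) g.1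
      (Finset.mem_univ _)

end MemoryHMM

theorem sum_mul_mMemPost {𝕄 S X : Type*} {N T : ℕ} [Fintype 𝕄] [Fintype S] [DecidableEq 𝕄]
    (pM : (Fin N → 𝕄) → ℝ) (A : Matrix (Fin N × S) (Fin N × S) ℝ) (μ : Fin N × S → ℝ)
    (W : X → 𝕄 → Fin N × S → ℝ) (jstar : Fin N) (x : Fin T → X) (b : 𝕄 → ℝ) :
    ∑ m0, b m0 * mMemPost pM A μ W jstar x m0
      = (∑ m, b (m jstar) * (pM m * mSeqPm A μ W m x)) / mSeqP pM A μ W x := by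
  simp only [mMemPost, mul_div_assoc', ← Finset.sum_div, Finset.mul_sum, mul_ite, mul_zero]
  rw [Finset.sum_comm]
  simp only [Finset.sum_ite_eq, Finset.mem_univ, if_true]

theorem stmt9_general {𝕄 S X : Type*} {N : ℕ}
    [Fintype 𝕄] [Fintype S] [Fintype X] [DecidableEq 𝕄] [DecidableEq S]
    (pM : (Fin N → 𝕄) → ℝ) (μ : Fin N × S → ℝ)
    (A : Matrix (Fin N × S) (Fin N × S) ℝ) (W : X → 𝕄 → Fin N × S → ℝ)
    (hpM0 : ∀ m, 0 ≤ pM m)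
    (hμ0 : ∀ g, 0 ≤ μ g)
    (hA0 : ∀ g g', 0 ≤ A g' g)
    (hW0 : ∀ z m0 g, 0 ≤ W z m0 g)
    -- non-degeneracy with recoverable hidden states `H* = {j*} × S*`
    (jstar : Fin N) (Sstar : Finset S)
    (hli : LinearIndependent ℝ
      (fun p : 𝕄 × {s : S // s ∈ Sstar} => fun z : X => W z p.1 (jstar, p.2.1)))
    (T : ℕ) (b : 𝕄 → ℝ) :
    ∃ (ΘV : Matrix (𝕄 × (Fin N × S)) X ℝ) (u : 𝕄 × (Fin N × S) → ℝ),
      ∀ x : Fin T → X,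
        0 < mSeqP pM A μ W x →
        -- `Î(x)` is nonempty
        (∃ i : Fin T,
          ((∀ j : Fin N, j ≠ jstar → ∑ s, mPostH pM A μ W x i (j, s) = 0)
            ∧ (∑ s, mPostH pM A μ W x i (jstar, s)) ≠ 0)
          ∧ (∀ s : S, s ∉ Sstar → ∑ j, mPostH pM A μ W x i (j, s) = 0)) →
        ∀ i : Fin T,
          -- `i ∈ Î(x)`
          ((∀ j : Fin N, j ≠ jstar → ∑ s, mPostH pM A μ W x i (j, s) = 0)
            ∧ (∑ s, mPostH pM A μ W x i (jstar, s)) ≠ 0)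
          ∧ (∀ s : S, s ∉ Sstar → ∑ j, mPostH pM A μ W x i (j, s) = 0) →
          ∃ r : ℝ, 0 < r ∧
            (∑ p : 𝕄 × (Fin N × S), u p *
                ((ΘV.mulVec (mGtok pM A μ W x i)) p * W (x i) p.1 p.2))
              = r * ∑ m0, b m0 * mMemPost pM A μ W jstar x m0 := by
  obtain ⟨Φ, hΦ⟩ := hli.exists_linearMap_apply_eq
    fun p => (Pi.single (p.1, (jstar, p.2.1)) 1 : 𝕄 × (Fin N × S) → ℝ)
  refine ⟨LinearMap.toMatrix' Φ, fun p => b p.1, fun x hx _ i ⟨⟨hJstar, hpost⟩, hSstar⟩ => ?_⟩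
  have hJ := mJointAt_nonneg x i hμ0 hA0 hW0
  obtain ⟨s, -, hs⟩ := Finset.exists_ne_zero_of_sum_ne_zero hpost
  have hZ : mZ pM A μ W x i ≠ 0 := mZ_ne_zero_of_mPostH_ne_zero x i hs
  have hZpos : 0 < mZ pM A μ W x i := hZ.symm.lt_of_le (mZ_nonneg x i hpM0 hJ)
  refine ⟨mSeqP pM A μ W x / mZ pM A μ W x i, div_pos hx hZpos, ?_⟩
  rw [LinearMap.toMatrix'_mulVec, sum_mul_linearMap_mGtok_mul_emission hΦ
    (pM_mul_mJointAt_eq_zero_off_recoverable hpM0 hJ hZ hJstar hSstar), sum_mul_mMemPost]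
  field_simp

theorem stmt9 {𝕄 S X : Type*} {N : ℕ}
    [Fintype 𝕄] [Fintype S] [Fintype X] [DecidableEq 𝕄] [DecidableEq S]
    (pM : (Fin N → 𝕄) → ℝ) (μ : Fin N × S → ℝ)
    (A : Matrix (Fin N × S) (Fin N × S) ℝ) (W : X → 𝕄 → Fin N × S → ℝ)
    (hpM0 : ∀ m, 0 ≤ pM m) (hpM1 : ∑ m, pM m = 1)
    (hμ0 : ∀ g, 0 ≤ μ g) (hμ1 : ∑ g, μ g = 1)
    (hA0 : ∀ g g', 0 ≤ A g' g) (hA1 : ∀ g, ∑ g', A g' g = 1)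
    (hW0 : ∀ z m0 g, 0 ≤ W z m0 g) (hW1 : ∀ m0 g, ∑ z, W z m0 g = 1)
    -- non-degeneracy with recoverable hidden states `H* = {j*} × S*`
    (jstar : Fin N) (Sstar : Finset S)
    (hli : LinearIndependent ℝ
      (fun p : 𝕄 × {s : S // s ∈ Sstar} => fun z : X => W z p.1 (jstar, p.2.1)))
    (hspan : Submodule.span ℝ
        {f : X → ℝ | ∃ m0 : 𝕄, ∃ s : S, s ∈ Sstar ∧ f = fun z => W z m0 (jstar, s)}
      ⊓ Submodule.span ℝ
        {f : X → ℝ | ∃ m0 : 𝕄, ∃ g : Fin N × S,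
          ¬(g.1 = jstar ∧ g.2 ∈ Sstar) ∧ f = fun z => W z m0 g}
      = ⊥)
    -- regularity
    (hErg : ∃ n₀ : ℕ, ∀ n ≥ n₀, ∀ g g' : Fin N × S, 0 < (A ^ n) g' g)
    (hfull : ∀ g, 0 < μ g)
    (T : ℕ) (b : 𝕄 → ℝ) :
    ∃ (ΘV : Matrix (𝕄 × (Fin N × S)) X ℝ) (u : 𝕄 × (Fin N × S) → ℝ),
      ∀ x : Fin T → X,
        0 < mSeqP pM A μ W x →
        -- `Î(x)` is nonempty
        (∃ i : Fin T,
          ((∀ j : Fin N, j ≠ jstar → ∑ s, mPostH pM A μ W x i (j, s) = 0)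
            ∧ (∑ s, mPostH pM A μ W x i (jstar, s)) ≠ 0)
          ∧ (∀ s : S, s ∉ Sstar → ∑ j, mPostH pM A μ W x i (j, s) = 0)) →
        ∀ i : Fin T,
          -- `i ∈ Î(x)`
          ((∀ j : Fin N, j ≠ jstar → ∑ s, mPostH pM A μ W x i (j, s) = 0)
            ∧ (∑ s, mPostH pM A μ W x i (jstar, s)) ≠ 0)
          ∧ (∀ s : S, s ∉ Sstar → ∑ j, mPostH pM A μ W x i (j, s) = 0) →
          ∃ r : ℝ, 0 < r ∧
            (∑ p : 𝕄 × (Fin N × S), u p *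
                ((ΘV.mulVec (mGtok pM A μ W x i)) p * W (x i) p.1 p.2))
              = r * ∑ m0, b m0 * mMemPost pM A μ W jstar x m0 :=
  stmt9_general pM μ A W hpM0 hμ0 hA0 hW0 jstar Sstar hli T b
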